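/- Let n ≥ 1, m ∈ ℕ ∪ {0}, 0 ≤ α < n, 0 < δ < 1 with mδ < n − α, α̃ = mδ + α, and assume α̃ > 0 (i.e. m ≥ 1 or α > 0). Let 1 ≤ r ≤ ∞ and δ̃ ≤ δ. Let K_α : ℝⁿ∖{0} → ℝ be a measurable kernel satisfying the size condition S*_α with constant A. Let b ∈ Λ(δ) and let (v,w) be a pair of weights in the class H(r, α̃, δ̃) with constant C_w. Then there is a constant C, depending only on n, m, α, δ, r, δ̃, A and C_w, such that for every ball B and every measurable f with f/v ∈ L^{r}(ℝⁿ): ‖(1/w)χ_B‖_∞ · ∫_B ∫_{2B} |b(x) − b(z)|^m |K_α(x−z)| |f(z)| dz dx ≤ C · ‖b‖_{Λ(δ)}^m · |B|^(1+δ̃/n) · ‖f/v‖_{r}. In particular, ‖(1/w)χ_B‖_∞ · ∫_B |T^m_{α,b}(f χ_{2B})(x)| dx is bounded by the same right-hand side. -/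

import Mathlib

open MeasureTheory Metric ENNReal NNReal

noncomputable section

/-- Euclidean space `ℝⁿ`. -/
abbrev E (n : ℕ) := EuclideanSpace ℝ (Fin n)

/-- `(∫ f^p dμ)^(1/p)` for finite `p`, and the essential supremum for `p = ∞`. -/
noncomputable def eN {n : ℕ} (p : ℝ≥0∞) (f : E n → ℝ≥0∞) (μ : Measure (E n)) : ℝ≥0∞ :=
  if p = ∞ then essSup f μ else (∫⁻ y, f y ^ p.toReal ∂μ) ^ (1 / p.toReal)

/-- The two-weight class `H(r, αt, δt)` with constant `C`, where `r'` denotes the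
conjugate exponent of `r` (so the `r = 1`, `r' = ∞` case is the essential supremum,
built into `eN`). -/
def Hclass (n : ℕ) (r' : ℝ≥0∞) (αt δ δt : ℝ) (v w : E n → ℝ≥0∞) (C : ℝ≥0∞) : Prop :=
  ∀ (c : E n) (R : ℝ), 0 < R →
    essSup (fun y => (w y)⁻¹) (volume.restrict (ball c R)) *
        volume (ball c R) ^ ((δ - δt) / (n : ℝ)) *
        eN r' (fun y =>
          v y * (volume (ball c R) ^ ((1 : ℝ) / (n : ℝ)) +
            ENNReal.ofReal (dist c y)) ^ (-((n : ℝ) - αt + δ))) volume ≤ C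

/-- The local condition (L) with constant `C`. -/
def LocalCond (n : ℕ) (r r' : ℝ≥0∞) (αt δt : ℝ) (v w : E n → ℝ≥0∞) (C : ℝ≥0∞) : Prop :=
  ∀ (c : E n) (R : ℝ), 0 < R →
    essSup (fun y => (w y)⁻¹) (volume.restrict (ball c R)) *
        volume (ball c R) ^ ((αt - δt) / (n : ℝ) - r⁻¹.toReal) *
        eN r' v ((volume (ball c R))⁻¹ • volume.restrict (ball c R)) ≤ C

/-- The global condition (G) with constant `C`. -/
def GlobalCond (n : ℕ) (r' : ℝ≥0∞) (αt δ δt : ℝ) (v w : E n → ℝ≥0∞) (C : ℝ≥0∞) : Prop :=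
  ∀ (c : E n) (R : ℝ), 0 < R →
    essSup (fun y => (w y)⁻¹) (volume.restrict (ball c R)) *
        volume (ball c R) ^ ((δ - δt) / (n : ℝ)) *
        eN r' (fun y => v y * (ENNReal.ofReal (dist c y)) ^ (-((n : ℝ) - αt + δ)))
          (volume.restrict ((ball c R)ᶜ)) ≤ C

/-- `b ∈ Λ(δ)` with Lipschitz-`δ` constant `Cb`. -/
def LipDelta {n : ℕ} (δ Cb : ℝ) (b : E n → ℝ) : Prop :=
  ∀ x y : E n, |b x - b y| ≤ Cb * dist x y ^ δ

/-- The size condition `S*_α` with constant `A`. -/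
def SizeCond (n : ℕ) (α A : ℝ) (K : E n → ℝ) : Prop :=
  ∀ x : E n, x ≠ 0 → |K x| ≤ A * ‖x‖ ^ (α - (n : ℝ))

/-- The smoothness condition `H*_{α,∞}` with exponent `γ` and constant `A`. -/
def SmoothCond (n : ℕ) (α γ A : ℝ) (K : E n → ℝ) : Prop :=
  ∀ x x' y : E n, 2 * dist x x' ≤ dist x y →
    |K (x - y) - K (x' - y)| + |K (y - x) - K (y - x')| ≤
      A * dist x x' ^ γ / dist x y ^ ((n : ℝ) - α + γ)

/-!
For `x ∈ B = B(c, R)` and `z ∈ 2B`, the `Λ(δ)` bound on `b` and the size condition on `K_α`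
dominate the integrand by `A ‖b‖^m |x - z|^(α̃ - n) |f z|`. Integrating the Riesz kernel
`|x - z|^(α̃ - n)` over `x ∈ B ⊆ B(z, 3R)` gives, by translation and dilation, a multiple of
`R^α̃`, the multiple being finite because `α̃ > 0`. What is left is `∫_{2B} |f|`: on `2B` the
weight `(|B|^(1/n) + |c - z|)^(-(n - α̃ + δ))` of the class `H(r, α̃, δ̃)` is at least
`(|B|^(1/n) + 2R)^(-(n - α̃ + δ))`, so it can be inserted at that cost, after which Hölder's
inequality for `|f|/v ∈ L^r` against `v · weight ∈ L^r'` brings in the `H`-condition. All powers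
of `R` then combine into `|B|^(1 + δ̃/n)`.
-/

lemma E.nontrivial {n : ℕ} (hn : 1 ≤ n) : Nontrivial (E n) :=
  Module.nontrivial_of_finrank_pos (R := ℝ) (by rw [finrank_euclideanSpace_fin]; omega)

lemma ENNReal.mul_le_mul_inv_mul_mul {a v g : ℝ≥0∞} (hav : a * v⁻¹ ≠ ∞) (hvg : v * g ≠ ∞)
    (hg : g ≠ 0) : a * g ≤ a * v⁻¹ * (v * g) := by
  rcases eq_or_ne v 0 with rfl | hv0
  · have ha : a = 0 := by contrapose! hav; simp [hav]
    simp [ha]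
  have hvt : v ≠ ∞ := by rintro rfl; simp [hg] at hvg
  rw [mul_assoc, ← mul_assoc v⁻¹, ENNReal.inv_mul_cancel hv0 hvt, one_mul]

lemma ball_subset_ball_three_mul {X : Type*} [PseudoMetricSpace X] {c z : X} {R : ℝ}
    (hz : z ∈ ball c (2 * R)) : ball c R ⊆ ball z (3 * R) :=
  ball_subset_ball' (by linarith [mem_ball'.mp hz])

lemma ofReal_abs_integral_le_lintegral {X : Type*} [MeasurableSpace X] (μ : Measure X)
    (g : X → ℝ) : ENNReal.ofReal |∫ z, g z ∂μ| ≤ ∫⁻ z, ENNReal.ofReal |g z| ∂μ := by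
  simpa only [Real.enorm_eq_ofReal_abs] using enorm_integral_le_lintegral_enorm g

lemma setLIntegral_ball_le_rpow_mul_lintegral_mul_rpow_neg {X : Type*} [PseudoMetricSpace X]
    [MeasurableSpace X] [OpensMeasurableSpace X] (μ : Measure X) (a : X → ℝ≥0∞) {u : ℝ≥0∞}
    (hu0 : u ≠ 0) (hut : u ≠ ∞) {β : ℝ} (hβ : 0 ≤ β) (c : X) (ρ : ℝ) :
    ∫⁻ z in ball c ρ, a z ∂μ ≤
      (u + ENNReal.ofReal ρ) ^ β * ∫⁻ z, a z * (u + ENNReal.ofReal (dist c z)) ^ (-β) ∂μ := by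
  rw [← lintegral_const_mul' _ _ (ENNReal.rpow_ne_top_of_nonneg hβ (by finiteness))]
  refine (setLIntegral_mono' measurableSet_ball fun z hz => ?_).trans
    (setLIntegral_le_lintegral _ _)
  set d := u + ENNReal.ofReal (dist c z)
  have hd0 : d ^ β ≠ 0 := by simp [d, ENNReal.rpow_eq_zero_iff, hu0, hut]
  have hdt : d ^ β ≠ ∞ := by simp [d, ENNReal.rpow_eq_top_iff, hu0, hut]
  have hdρ : d ≤ u + ENNReal.ofReal ρ :=
    add_le_add_right (ENNReal.ofReal_le_ofReal (mem_ball'.mp hz).le) _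
  calc a z = a z * (d ^ β * (d ^ β)⁻¹) := by rw [ENNReal.mul_inv_cancel hd0 hdt, mul_one]
    _ ≤ a z * ((u + ENNReal.ofReal ρ) ^ β * (d ^ β)⁻¹) := by gcongr
    _ = (u + ENNReal.ofReal ρ) ^ β * (a z * d ^ (-β)) := by rw [ENNReal.rpow_neg]; ring

lemma lintegral_mul_le_essSup_mul_lintegral {X : Type*} [MeasurableSpace X] {μ : Measure X}
    (F : X → ℝ≥0∞) {G : X → ℝ≥0∞} (hG : AEMeasurable G μ) :
    ∫⁻ z, F z * G z ∂μ ≤ essSup F μ * ∫⁻ z, G z ∂μ := by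
  rw [← lintegral_const_mul'' _ hG]
  exact lintegral_mono_ae <| by
    filter_upwards [ae_le_essSup F] with z hz using mul_le_mul_left hz _

section HolderInequality

variable {n : ℕ} {μ : Measure (E n)}

lemma lintegral_mul_le_eN_mul_eN {p q : ℝ≥0∞} (hpq : p.HolderConjugate q)
    {F G : E n → ℝ≥0∞} (hF : AEMeasurable F μ) (hG : AEMeasurable G μ) :
    ∫⁻ z, F z * G z ∂μ ≤ eN p F μ * eN q G μ := by
  rcases eq_or_ne p ∞ with rfl | hp
  · obtain rfl : q = 1 := hpq.eq_top_iff_eq_one.mp rfl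
    simpa [eN] using lintegral_mul_le_essSup_mul_lintegral F hG
  rcases eq_or_ne q ∞ with rfl | hq
  · obtain rfl : p = 1 := hpq.symm.eq_top_iff_eq_one.mp rfl
    simpa [eN, mul_comm] using lintegral_mul_le_essSup_mul_lintegral G hF
  simpa [eN, hp, hq] using
    ENNReal.lintegral_mul_le_Lp_mul_Lq μ (hpq.toReal_of_ne_top hp hq) hF hG

lemma ae_ne_top_of_eN_ne_top {p : ℝ≥0∞} (hp : p ≠ 0) {G : E n → ℝ≥0∞}
    (hG : AEMeasurable G μ) (h : eN p G μ ≠ ∞) : ∀ᵐ z ∂μ, G z ≠ ∞ := by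
  rcases eq_or_ne p ∞ with rfl | hp'
  · rw [eN, if_pos rfl] at h
    filter_upwards [ae_le_essSup G] with z hz using ne_top_of_le_ne_top h hz
  · have hpos : 0 < p.toReal := ENNReal.toReal_pos hp hp'
    rw [eN, if_neg hp', Ne, ENNReal.rpow_eq_top_iff] at h
    have hint : ∫⁻ z, G z ^ p.toReal ∂μ ≠ ∞ := fun h' => h (Or.inr ⟨h', by positivity⟩)
    filter_upwards [ae_lt_top' (hG.pow_const _) hint] with z hz
    simpa [ENNReal.rpow_eq_top_iff, hpos, hpos.not_gt] using hz.ne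

lemma lintegral_mul_le_eN_mul_inv_mul_eN {p q : ℝ≥0∞} (hpq : p.HolderConjugate q)
    {a v g : E n → ℝ≥0∞} (ha : AEMeasurable a μ) (hv : AEMeasurable v μ)
    (hg : AEMeasurable g μ) (hg0 : ∀ z, g z ≠ 0)
    (hav : eN p (fun z => a z * (v z)⁻¹) μ ≠ ∞) (hvg : eN q (fun z => v z * g z) μ ≠ ∞) :
    ∫⁻ z, a z * g z ∂μ ≤ eN p (fun z => a z * (v z)⁻¹) μ * eN q (fun z => v z * g z) μ := by
  calc ∫⁻ z, a z * g z ∂μ ≤ ∫⁻ z, a z * (v z)⁻¹ * (v z * g z) ∂μ := by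
        refine lintegral_mono_ae ?_
        filter_upwards [ae_ne_top_of_eN_ne_top hpq.ne_zero (ha.mul hv.inv) hav,
          ae_ne_top_of_eN_ne_top hpq.symm.ne_zero (hv.mul hg) hvg] with z h₁ h₂
        exact ENNReal.mul_le_mul_inv_mul_mul h₁ h₂ (hg0 z)
    _ ≤ _ := lintegral_mul_le_eN_mul_eN hpq (ha.mul hv.inv) (hv.mul hg)

end HolderInequality

section RieszPotential

variable {F : Type*} [NormedAddCommGroup F] [NormedSpace ℝ F] [FiniteDimensional ℝ F]
  [MeasurableSpace F] [BorelSpace F] (μ : Measure F) [μ.IsAddHaarMeasure]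

lemma lintegral_eq_mul_lintegral_comp_add_smul (z : F) {ρ : ℝ} (hρ : 0 < ρ) {G : F → ℝ≥0∞}
    (hG : Measurable G) :
    ∫⁻ x, G x ∂μ = ENNReal.ofReal (ρ ^ Module.finrank ℝ F) * ∫⁻ u, G (z + ρ • u) ∂μ := by
  rw [← lintegral_map (f := fun y => G (z + y)) (by fun_prop) (by fun_prop),
    Measure.map_addHaar_smul μ hρ.ne', lintegral_smul_measure, lintegral_add_left_eq_self,
    abs_of_pos (by positivity), smul_eq_mul, ← mul_assoc, ← ENNReal.ofReal_mul (by positivity),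
    mul_inv_cancel₀ (by positivity), ENNReal.ofReal_one, one_mul]

lemma lintegral_ball_norm_sub_rpow (z : F) {ρ : ℝ} (hρ : 0 < ρ) (s : ℝ) :
    ∫⁻ x in ball z ρ, ENNReal.ofReal (‖x - z‖ ^ s) ∂μ =
      ENNReal.ofReal (ρ ^ (s + Module.finrank ℝ F)) *
        ∫⁻ u in ball 0 1, ENNReal.ofReal (‖u‖ ^ s) ∂μ := by
  have hmeas : ∀ w : F, Measurable fun x : F => ENNReal.ofReal (‖x - w‖ ^ s) := fun w => by
    fun_prop
  have hscale : ∀ u, (ball z ρ).indicator (fun x => ENNReal.ofReal (‖x - z‖ ^ s)) (z + ρ • u) =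
      ENNReal.ofReal (ρ ^ s) * (ball 0 1).indicator (fun u => ENNReal.ofReal (‖u‖ ^ s)) u := by
    intro u
    have hmem : z + ρ • u ∈ ball z ρ ↔ u ∈ ball (0 : F) 1 := by
      simp [norm_smul, abs_of_pos hρ, hρ]
    by_cases hu : u ∈ ball (0 : F) 1
    · simp [hu, hmem.mpr hu, norm_smul, abs_of_pos hρ, Real.mul_rpow hρ.le (norm_nonneg u),
        ENNReal.ofReal_mul (Real.rpow_nonneg hρ.le s)]
    · simp [hu, mt hmem.mp hu]
  rw [← lintegral_indicator measurableSet_ball,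
    lintegral_eq_mul_lintegral_comp_add_smul μ z hρ ((hmeas z).indicator measurableSet_ball)]
  simp_rw [hscale]
  rw [lintegral_const_mul _ ((by simpa using hmeas 0 : Measurable _).indicator measurableSet_ball),
    lintegral_indicator measurableSet_ball, ← mul_assoc, ← ENNReal.ofReal_mul (by positivity),
    ← Real.rpow_natCast, ← Real.rpow_add hρ, add_comm]

lemma lintegral_ball_norm_rpow_lt_top (hd : 1 ≤ Module.finrank ℝ F) {s : ℝ}
    (hs : -(Module.finrank ℝ F : ℝ) < s) :
    ∫⁻ x in ball (0 : F) 1, ENNReal.ofReal (‖x‖ ^ s) ∂μ < ∞ := by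
  have hint : IntegrableOn (fun x : F => ‖x‖ ^ s) (ball 0 1) μ :=
    integrableOn_ball_of_norm_le_rpow (C := 1) (α := -s) hd (by linarith)
      (.of_forall fun x => by simp [abs_of_nonneg (Real.rpow_nonneg (norm_nonneg x) s)])
      (measurable_norm.pow_const s).aestronglyMeasurable
  exact (hasFiniteIntegral_iff_ofReal
    (.of_forall fun x => Real.rpow_nonneg (norm_nonneg x) s)).mp hint.hasFiniteIntegral

lemma lintegral_ball_lintegral_ball_two_mul_le (s : ℝ) {a : F → ℝ≥0∞} (ha : Measurable a)
    (c : F) {R : ℝ} (hR : 0 < R) :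
    ∫⁻ x in ball c R, ∫⁻ z in ball c (2 * R), ENNReal.ofReal (‖x - z‖ ^ s) * a z ∂μ ∂μ ≤
      ENNReal.ofReal ((3 * R) ^ (s + Module.finrank ℝ F)) *
        (∫⁻ u in ball 0 1, ENNReal.ofReal (‖u‖ ^ s) ∂μ) * ∫⁻ z in ball c (2 * R), a z ∂μ := by
  rw [lintegral_lintegral_swap (by fun_prop), ← lintegral_const_mul _ ha]
  refine setLIntegral_mono' measurableSet_ball fun z hz => ?_
  rw [lintegral_mul_const _ (by fun_prop), ← lintegral_ball_norm_sub_rpow μ z (by positivity)]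
  gcongr
  exact ball_subset_ball_three_mul hz

end RieszPotential

section BallScaling

variable {n : ℕ}

def ballRadiusRatio (n : ℕ) : ℝ≥0∞ := (volume (ball (0 : E n) 1) ^ ((1 : ℝ) / n))⁻¹

lemma ballRadiusRatio_ne_top : ballRadiusRatio n ≠ ∞ := by
  simp [ballRadiusRatio, ENNReal.rpow_eq_zero_iff, (measure_ball_pos volume (0 : E n) one_pos).ne']

lemma ofReal_eq_volume_ball_rpow_mul_ballRadiusRatio (hn : 1 ≤ n) (c : E n) {R : ℝ}
    (hR : 0 ≤ R) :
    ENNReal.ofReal R = volume (ball c R) ^ ((1 : ℝ) / n) * ballRadiusRatio n := by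
  have := E.nontrivial hn
  have hω0 : volume (ball (0 : E n) 1) ^ ((1 : ℝ) / n) ≠ 0 :=
    (ENNReal.rpow_pos (measure_ball_pos volume _ one_pos) measure_ball_lt_top.ne).ne'
  have hωt : volume (ball (0 : E n) 1) ^ ((1 : ℝ) / n) ≠ ∞ :=
    ENNReal.rpow_ne_top_of_nonneg (by positivity) measure_ball_lt_top.ne
  have hn' : (n : ℝ) ≠ 0 := by positivity
  rw [Measure.addHaar_ball volume c hR, finrank_euclideanSpace_fin,
    ENNReal.mul_rpow_of_nonneg _ _ (by positivity), ENNReal.ofReal_rpow_of_nonneg (by positivity)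
      (by positivity), ← Real.rpow_natCast, ← Real.rpow_mul hR, mul_one_div_cancel hn',
    Real.rpow_one, ballRadiusRatio, mul_assoc, ENNReal.mul_inv_cancel hω0 hωt, mul_one]

lemma ofReal_rpow_mul_rpow_mul_inv_rpow_eq_volume_ball_rpow (hn : 1 ≤ n) (c : E n) {R : ℝ}
    (hR : 0 < R) {a b : ℝ} (ha : 0 ≤ a) (hb : 0 ≤ b) (e : ℝ) :
    ENNReal.ofReal ((3 * R) ^ a) *
        (volume (ball c R) ^ ((1 : ℝ) / n) + ENNReal.ofReal (2 * R)) ^ b *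
        (volume (ball c R) ^ (e / n))⁻¹ =
      (3 * ballRadiusRatio n) ^ a * (1 + 2 * ballRadiusRatio n) ^ b *
        volume (ball c R) ^ ((a + b - e) / n) := by
  set u := volume (ball c R) ^ ((1 : ℝ) / n)
  have hu0 : u ≠ 0 := (ENNReal.rpow_pos (measure_ball_pos volume c hR) measure_ball_lt_top.ne).ne'
  have hut : u ≠ ∞ := ENNReal.rpow_ne_top_of_nonneg (by positivity) measure_ball_lt_top.ne
  have hpow : ∀ s : ℝ, volume (ball c R) ^ (s / n) = u ^ s := fun s => by
    rw [← ENNReal.rpow_mul, one_div_mul_eq_div]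
  have hR' : ENNReal.ofReal R = u * ballRadiusRatio n :=
    ofReal_eq_volume_ball_rpow_mul_ballRadiusRatio hn c hR.le
  have hτ : u + 2 * (u * ballRadiusRatio n) = u * (1 + 2 * ballRadiusRatio n) := by ring
  rw [hpow, hpow, ← ENNReal.ofReal_rpow_of_nonneg (by positivity) ha,
    ENNReal.ofReal_mul zero_le_three, ENNReal.ofReal_mul zero_le_two, hR', ENNReal.ofReal_ofNat,
    ENNReal.ofReal_ofNat, hτ, sub_eq_add_neg, ENNReal.rpow_add _ _ hu0 hut,
    ENNReal.rpow_add _ _ hu0 hut, ENNReal.rpow_neg]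
  simp only [ENNReal.mul_rpow_of_nonneg _ _ ha, ENNReal.mul_rpow_of_nonneg _ _ hb]
  ring

end BallScaling

lemma abs_sub_pow_mul_abs_le {n m : ℕ} {α δ A Cb : ℝ} {K b : E n → ℝ} (hK : SizeCond n α A K)
    (hb : LipDelta δ Cb b) {x z : E n} (hxz : x ≠ z) :
    |b x - b z| ^ m * |K (x - z)| ≤ Cb ^ m * A * ‖x - z‖ ^ (m * δ + α - n) := by
  have hd : 0 < ‖x - z‖ := norm_pos_iff.mpr (sub_ne_zero.mpr hxz)
  have hbxz : |b x - b z| ≤ Cb * ‖x - z‖ ^ δ := dist_eq_norm x z ▸ hb x z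
  calc |b x - b z| ^ m * |K (x - z)| ≤ (Cb * ‖x - z‖ ^ δ) ^ m * (A * ‖x - z‖ ^ (α - n)) :=
        mul_le_mul (pow_le_pow_left₀ (abs_nonneg _) hbxz m) (hK _ (sub_ne_zero.mpr hxz))
          (abs_nonneg _) (pow_nonneg ((abs_nonneg _).trans hbxz) m)
    _ = Cb ^ m * A * ‖x - z‖ ^ (m * δ + α - n) := by
        rw [mul_pow, ← Real.rpow_mul_natCast hd.le, add_sub_assoc, Real.rpow_add hd]
        ring_nf

lemma lintegral_ball_lintegral_ball_two_commutator_le {n m : ℕ} (hn : 1 ≤ n) {α δ A Cb : ℝ}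
    {K b : E n → ℝ} (hK : SizeCond n α A K) (hb : LipDelta δ Cb b) {f : E n → ℝ}
    (hf : Measurable f) (c : E n) {R : ℝ} (hR : 0 < R) :
    ∫⁻ x in ball c R, ∫⁻ z in ball c (2 * R),
        ENNReal.ofReal (|b x - b z| ^ m * |K (x - z)| * |f z|) ≤
      ENNReal.ofReal (Cb ^ m * A) * ENNReal.ofReal ((3 * R) ^ (m * δ + α)) *
        (∫⁻ u in ball (0 : E n) 1, ENNReal.ofReal (‖u‖ ^ (m * δ + α - n))) *
        ∫⁻ z in ball c (2 * R), ENNReal.ofReal |f z| := by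
  have := E.nontrivial hn
  calc ∫⁻ x in ball c R, ∫⁻ z in ball c (2 * R),
        ENNReal.ofReal (|b x - b z| ^ m * |K (x - z)| * |f z|)
      ≤ ∫⁻ x in ball c R, ∫⁻ z in ball c (2 * R), ENNReal.ofReal (Cb ^ m * A) *
          (ENNReal.ofReal (‖x - z‖ ^ (m * δ + α - n)) * ENNReal.ofReal |f z|) := by
        refine lintegral_mono fun x => lintegral_mono_ae ?_
        filter_upwards [ae_restrict_of_ae (compl_mem_ae_iff.mpr (measure_singleton x))] with z hz
        rw [← ENNReal.ofReal_mul (by positivity), ← ENNReal.ofReal_mul' (by positivity)]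
        refine ENNReal.ofReal_le_ofReal ((mul_le_mul_of_nonneg_right
          (abs_sub_pow_mul_abs_le hK hb (Ne.symm hz)) (abs_nonneg _)).trans_eq (by ring))
    _ = ENNReal.ofReal (Cb ^ m * A) * ∫⁻ x in ball c R, ∫⁻ z in ball c (2 * R),
          ENNReal.ofReal (‖x - z‖ ^ (m * δ + α - n)) * ENNReal.ofReal |f z| := by
        simp_rw [lintegral_const_mul' _ _ ENNReal.ofReal_ne_top]
    _ ≤ _ := by
        rw [mul_assoc _ (ENNReal.ofReal _), mul_assoc]
        gcongr
        simpa [finrank_euclideanSpace_fin] using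
          lintegral_ball_lintegral_ball_two_mul_le volume (m * δ + α - n) hf.abs.ennreal_ofReal c hR

lemma essSup_inv_mul_lintegral_ball_two_le {n : ℕ} {r r' : ℝ≥0∞} (hrr' : r.HolderConjugate r')
    {αt δ δt : ℝ} (hβ : 0 ≤ (n : ℝ) - αt + δ) {v w : E n → ℝ≥0∞} (hv : Measurable v)
    {Cw : ℝ≥0∞} (hCw : Cw ≠ ∞) (hH : Hclass n r' αt δ δt v w Cw) {f : E n → ℝ}
    (hf : Measurable f) (hfv : eN r (fun z => ENNReal.ofReal |f z| * (v z)⁻¹) volume ≠ ∞)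
    (c : E n) {R : ℝ} (hR : 0 < R) :
    essSup (fun y => (w y)⁻¹) (volume.restrict (ball c R)) *
        ∫⁻ z in ball c (2 * R), ENNReal.ofReal |f z| ≤
      Cw * (volume (ball c R) ^ ((1 : ℝ) / n) + ENNReal.ofReal (2 * R)) ^ ((n : ℝ) - αt + δ) *
        (volume (ball c R) ^ ((δ - δt) / n))⁻¹ *
        eN r (fun z => ENNReal.ofReal |f z| * (v z)⁻¹) volume := by
  set V := volume (ball c R)
  set W := essSup (fun y => (w y)⁻¹) (volume.restrict (ball c R))
  set N := eN r (fun z => ENNReal.ofReal |f z| * (v z)⁻¹) volume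
  set β := (n : ℝ) - αt + δ
  set g : E n → ℝ≥0∞ := fun y => (V ^ ((1 : ℝ) / n) + ENNReal.ofReal (dist c y)) ^ (-β)
  set M := eN r' (fun y => v y * g y) volume
  rcases eq_or_ne W 0 with hW | hW
  · simp [hW]
  have hV0 : V ≠ 0 := (measure_ball_pos volume c hR).ne'
  have hVt : V ≠ ∞ := measure_ball_lt_top.ne
  have hVe0 : V ^ ((δ - δt) / n) ≠ 0 := (ENNReal.rpow_pos (pos_iff_ne_zero.mpr hV0) hVt).ne'
  have hVet : V ^ ((δ - δt) / n) ≠ ∞ := ENNReal.rpow_ne_top_of_ne_zero hV0 hVt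
  have hHB : W * V ^ ((δ - δt) / n) * M ≤ Cw := hH c R hR
  have hM : M ≠ ∞ := fun hM => by
    have := hHB.trans_lt hCw.lt_top
    rw [hM, ENNReal.mul_top (mul_ne_zero hW hVe0)] at this
    exact this.false
  have hg0 : ∀ y, g y ≠ 0 := fun y => by
    simp [g, ENNReal.rpow_eq_zero_iff, hβ.not_gt, ENNReal.rpow_eq_top_iff, hV0, hVt]
  calc W * ∫⁻ z in ball c (2 * R), ENNReal.ofReal |f z|
      ≤ W * ((V ^ ((1 : ℝ) / n) + ENNReal.ofReal (2 * R)) ^ β *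
          ∫⁻ z, ENNReal.ofReal |f z| * g z) := by
        gcongr
        exact setLIntegral_ball_le_rpow_mul_lintegral_mul_rpow_neg _ _
          (ENNReal.rpow_pos (pos_iff_ne_zero.mpr hV0) hVt).ne'
          (ENNReal.rpow_ne_top_of_ne_zero hV0 hVt) hβ c (2 * R)
    _ ≤ W * ((V ^ ((1 : ℝ) / n) + ENNReal.ofReal (2 * R)) ^ β * (N * M)) := by
        gcongr
        exact lintegral_mul_le_eN_mul_inv_mul_eN hrr' (by fun_prop) hv.aemeasurable
          (by fun_prop) hg0 hfv hM
    _ = (V ^ ((1 : ℝ) / n) + ENNReal.ofReal (2 * R)) ^ β * N *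
          (W * V ^ ((δ - δt) / n) * M) * (V ^ ((δ - δt) / n))⁻¹ := by
        conv_lhs => rw [← mul_one W, ← ENNReal.mul_inv_cancel hVe0 hVet]
        ring
    _ ≤ _ := by
        grw [hHB]
        ring_nf
        exact le_rfl

def commutatorLocalConst (n : ℕ) (αt δ A : ℝ) (Cw : ℝ≥0∞) : ℝ≥0∞ :=
  ENNReal.ofReal A * (∫⁻ u in ball (0 : E n) 1, ENNReal.ofReal (‖u‖ ^ (αt - n))) * Cw *
    (3 * ballRadiusRatio n) ^ αt * (1 + 2 * ballRadiusRatio n) ^ ((n : ℝ) - αt + δ)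

lemma commutatorLocalConst_ne_top {n : ℕ} (hn : 1 ≤ n) {αt δ : ℝ} (hαt : 0 < αt)
    (hβ : 0 ≤ (n : ℝ) - αt + δ) (A : ℝ) {Cw : ℝ≥0∞} (hCw : Cw ≠ ∞) :
    commutatorLocalConst n αt δ A Cw ≠ ∞ := by
  have := E.nontrivial hn
  have hΩ := lintegral_ball_norm_rpow_lt_top (volume : Measure (E n)) (s := αt - n)
    (by rw [finrank_euclideanSpace_fin]; exact hn) (by rw [finrank_euclideanSpace_fin]; linarith)
  have := ballRadiusRatio_ne_top (n := n)
  refine ENNReal.mul_ne_top (ENNReal.mul_ne_top (by finiteness) ?_) ?_ <;>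
    exact ENNReal.rpow_ne_top_of_nonneg (by positivity) (by finiteness)

lemma essSup_inv_mul_lintegral_ball_lintegral_ball_two_le {n m : ℕ} (hn : 1 ≤ n)
    {α δ δt αt A : ℝ} (hαt : αt = m * δ + α) (hαtpos : 0 < αt) (hβ : 0 ≤ (n : ℝ) - αt + δ)
    {r r' : ℝ≥0∞} (hrr' : r.HolderConjugate r') {K b : E n → ℝ} (hK : SizeCond n α A K)
    {Cb : ℝ} (hCb : 0 ≤ Cb) (hb : LipDelta δ Cb b) {v w : E n → ℝ≥0∞} (hv : Measurable v)
    {Cw : ℝ≥0∞} (hCw : Cw ≠ ∞) (hH : Hclass n r' αt δ δt v w Cw) {f : E n → ℝ}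
    (hf : Measurable f) (hfv : eN r (fun z => ENNReal.ofReal |f z| * (v z)⁻¹) volume ≠ ∞)
    (c : E n) {R : ℝ} (hR : 0 < R) :
    essSup (fun y => (w y)⁻¹) (volume.restrict (ball c R)) *
        ∫⁻ x in ball c R, ∫⁻ z in ball c (2 * R),
          ENNReal.ofReal (|b x - b z| ^ m * |K (x - z)| * |f z|) ≤
      commutatorLocalConst n αt δ A Cw * ENNReal.ofReal Cb ^ m *
        volume (ball c R) ^ (1 + δt / n) *
        eN r (fun z => ENNReal.ofReal |f z| * (v z)⁻¹) volume := by
  subst hαt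
  set V := volume (ball c R)
  set W := essSup (fun y => (w y)⁻¹) (volume.restrict (ball c R))
  set N := eN r (fun z => ENNReal.ofReal |f z| * (v z)⁻¹) volume
  set Ω := ∫⁻ u in ball (0 : E n) 1, ENNReal.ofReal (‖u‖ ^ (m * δ + α - n))
  set β := (n : ℝ) - (m * δ + α) + δ
  have hexp : (m * δ + α + β - (δ - δt)) / n = 1 + δt / n := by
    have hn' : (n : ℝ) ≠ 0 := by positivity
    field_simp
    ring
  calc _ ≤ W * (ENNReal.ofReal (Cb ^ m * A) * ENNReal.ofReal ((3 * R) ^ (m * δ + α)) * Ω *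
        ∫⁻ z in ball c (2 * R), ENNReal.ofReal |f z|) := by
        gcongr
        exact lintegral_ball_lintegral_ball_two_commutator_le hn hK hb hf c hR
    _ = ENNReal.ofReal Cb ^ m * ENNReal.ofReal A * Ω * ENNReal.ofReal ((3 * R) ^ (m * δ + α)) *
        (W * ∫⁻ z in ball c (2 * R), ENNReal.ofReal |f z|) := by
        rw [ENNReal.ofReal_mul (by positivity), ENNReal.ofReal_pow hCb]
        ring
    _ ≤ ENNReal.ofReal Cb ^ m * ENNReal.ofReal A * Ω * ENNReal.ofReal ((3 * R) ^ (m * δ + α)) *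
        (Cw * (V ^ ((1 : ℝ) / n) + ENNReal.ofReal (2 * R)) ^ β * (V ^ ((δ - δt) / n))⁻¹ * N) :=
        mul_le_mul_right (essSup_inv_mul_lintegral_ball_two_le hrr' hβ hv hCw hH hf hfv c hR) _
    _ = ENNReal.ofReal Cb ^ m * (ENNReal.ofReal A * Ω * Cw) *
        (ENNReal.ofReal ((3 * R) ^ (m * δ + α)) * (V ^ ((1 : ℝ) / n) + ENNReal.ofReal (2 * R)) ^ β *
          (V ^ ((δ - δt) / n))⁻¹) * N := by ring
    _ = _ := by
        rw [ofReal_rpow_mul_rpow_mul_inv_rpow_eq_volume_ball_rpow hn c hR hαtpos.le hβ, hexp,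
          commutatorLocalConst]
        ring

theorem statement12_general (n m : ℕ) (α δ δt αt A : ℝ) (r r' : ℝ≥0∞) (Cw : ℝ≥0)
    (hn : 1 ≤ n) (hδ0 : 0 < δ)
    (hmδ : (m : ℝ) * δ < (n : ℝ) - α) (hαt : αt = (m : ℝ) * δ + α) (hαtpos : 0 < αt)
    (hconj : r⁻¹ + r'⁻¹ = 1) :
    ∃ C : ℝ≥0, 0 < C ∧
      ∀ (K : E n → ℝ), Measurable K → SizeCond n α A K →
      ∀ (b : E n → ℝ) (Cb : ℝ), Measurable b → 0 ≤ Cb → LipDelta δ Cb b →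
      ∀ (v w : E n → ℝ≥0∞), Measurable v → Measurable w →
        Hclass n r' αt δ δt v w (Cw : ℝ≥0∞) →
      ∀ (f : E n → ℝ), Measurable f →
        eN r (fun z => ENNReal.ofReal |f z| * (v z)⁻¹) volume < ∞ →
      ∀ (c : E n) (R : ℝ), 0 < R →
        (essSup (fun y => (w y)⁻¹) (volume.restrict (ball c R)) *
            ∫⁻ x in ball c R, ∫⁻ z in ball c (2 * R),
              ENNReal.ofReal (|b x - b z| ^ m * |K (x - z)| * |f z|)) ≤
          (C : ℝ≥0∞) * (ENNReal.ofReal Cb) ^ m *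
            volume (ball c R) ^ (1 + δt / (n : ℝ)) *
            eN r (fun z => ENNReal.ofReal |f z| * (v z)⁻¹) volume ∧
        (essSup (fun y => (w y)⁻¹) (volume.restrict (ball c R)) *
            ∫⁻ x in ball c R,
              ENNReal.ofReal |∫ z in ball c (2 * R), (b x - b z) ^ m * K (x - z) * f z|) ≤
          (C : ℝ≥0∞) * (ENNReal.ofReal Cb) ^ m *
            volume (ball c R) ^ (1 + δt / (n : ℝ)) *
            eN r (fun z => ENNReal.ofReal |f z| * (v z)⁻¹) volume := by
  have hβ : 0 ≤ (n : ℝ) - αt + δ := by linarith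
  set T := commutatorLocalConst n αt δ A Cw
  have hT : T ≤ (T.toNNReal + 1 : ℝ≥0) := by
    rw [ENNReal.coe_add, ENNReal.coe_toNNReal
      (commutatorLocalConst_ne_top hn hαtpos hβ A ENNReal.coe_ne_top), ENNReal.coe_one]
    exact le_self_add
  refine ⟨T.toNNReal + 1, by positivity, ?_⟩
  intro K _ hK b Cb _ hCb hb v w hv _ hH f hf hfv c R hR
  have hlocal := (essSup_inv_mul_lintegral_ball_lintegral_ball_two_le hn hαt hαtpos hβ
    (ENNReal.holderConjugate_iff.mpr hconj) hK hCb hb hv ENNReal.coe_ne_top hH hf hfv.ne c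
    hR).trans (mul_le_mul_left (mul_le_mul_left (mul_le_mul_left hT _) _) _)
  refine ⟨hlocal, le_trans ?_ hlocal⟩
  gcongr with x
  exact (ofReal_abs_integral_le_lintegral _ _).trans_eq (by simp only [abs_mul, abs_pow])

/-- local estimate: for `b ∈ Λ(δ)`, `K_α ∈ S*_α` (with `α̃ > 0`) and
`(v,w) ∈ H(r, α̃, δ̃)`,
`‖(1/w)χ_B‖_∞ ∫_B ∫_{2B} |b(x)−b(z)|^m |K_α(x−z)| |f(z)| dz dx
  ≤ C ‖b‖^m_{Λ(δ)} |B|^(1+δ̃/n) ‖f/v‖_r`, and in particular the same bound holds for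
`‖(1/w)χ_B‖_∞ ∫_B |T^m_{α,b}(f χ_{2B})|`. -/
theorem statement12 (n m : ℕ) (α δ δt αt A : ℝ) (r r' : ℝ≥0∞) (Cw : ℝ≥0)
    (hn : 1 ≤ n) (hα0 : 0 ≤ α) (hαn : α < (n : ℝ)) (hδ0 : 0 < δ) (hδ1 : δ < 1)
    (hmδ : (m : ℝ) * δ < (n : ℝ) - α) (hαt : αt = (m : ℝ) * δ + α) (hαtpos : 0 < αt)
    (hr : 1 ≤ r) (hconj : r⁻¹ + r'⁻¹ = 1) (hδt : δt ≤ δ) (hA : 0 ≤ A) :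
    ∃ C : ℝ≥0, 0 < C ∧
      ∀ (K : E n → ℝ), Measurable K → SizeCond n α A K →
      ∀ (b : E n → ℝ) (Cb : ℝ), Measurable b → 0 ≤ Cb → LipDelta δ Cb b →
      ∀ (v w : E n → ℝ≥0∞), Measurable v → Measurable w →
        Hclass n r' αt δ δt v w (Cw : ℝ≥0∞) →
      ∀ (f : E n → ℝ), Measurable f →
        eN r (fun z => ENNReal.ofReal |f z| * (v z)⁻¹) volume < ∞ →
      ∀ (c : E n) (R : ℝ), 0 < R →
        (essSup (fun y => (w y)⁻¹) (volume.restrict (ball c R)) *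
            ∫⁻ x in ball c R, ∫⁻ z in ball c (2 * R),
              ENNReal.ofReal (|b x - b z| ^ m * |K (x - z)| * |f z|)) ≤
          (C : ℝ≥0∞) * (ENNReal.ofReal Cb) ^ m *
            volume (ball c R) ^ (1 + δt / (n : ℝ)) *
            eN r (fun z => ENNReal.ofReal |f z| * (v z)⁻¹) volume ∧
        (essSup (fun y => (w y)⁻¹) (volume.restrict (ball c R)) *
            ∫⁻ x in ball c R,
              ENNReal.ofReal |∫ z in ball c (2 * R), (b x - b z) ^ m * K (x - z) * f z|) ≤
          (C : ℝ≥0∞) * (ENNReal.ofReal Cb) ^ m *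
            volume (ball c R) ^ (1 + δt / (n : ℝ)) *
            eN r (fun z => ENNReal.ofReal |f z| * (v z)⁻¹) volume :=
  statement12_general n m α δ δt αt A r r' Cw hn hδ0 hmδ hαt hαtpos hconj
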